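/- Duality of Potts partition functions: for a finite connected planar graph G with dual G^D, Z(G; q, v) = q^{1-|F|} v^{|E|} · Z(G^D; q, q/v), where Z(G; q, v) = Σ_{S ⊆ E} v^{|S|} q^{p(S)} and |F| is the number of faces of G. -/

import Mathlib

/-!
Combinatorial-map framework for planar graph duality.  A finite connected graph
embedded in a surface is encoded by its dart set `D`, the vertex rotation `σ`
and the fixed-point-free edge involution `α`; vertices, edges and faces are the
orbits of `σ`, `α` and `α ∘ σ` respectively.  The map is planar (genus 0) iff
it is connected and satisfies Euler's relation `|V| + |F| = |E| + 2`.  The dual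
map is obtained by exchanging the roles of the vertex and face permutations;
it keeps the same darts and the same edge involution, so edges of the map and
of its dual are canonically identified.
-/

structure CombMap where
  D : Type
  [fintypeD : Fintype D]
  [decD : DecidableEq D]
  σ : Equiv.Perm D
  α : Equiv.Perm D
  hinvol : ∀ d, α (α d) = d
  hfree : ∀ d, α d ≠ d

attribute [instance] CombMap.fintypeD CombMap.decD

namespace CombMap

variable (M : CombMap)

/-- orbit relation of a permutation -/
def orbitRel (f : Equiv.Perm M.D) (a b : M.D) : Prop := b = f a

/-- number of vertices: orbits of `σ` -/
noncomputable def nV : ℕ := Nat.card (Quot (M.orbitRel M.σ))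

/-- number of edges: orbits of the involution `α` -/
noncomputable def nE : ℕ := Nat.card (Quot (M.orbitRel M.α))

/-- number of faces: orbits of the face permutation `σ ∘ α` -/
noncomputable def nF : ℕ := Nat.card (Quot (M.orbitRel (M.α.trans M.σ)))

/-- the map is connected -/
def Connected : Prop :=
  ∀ a b : M.D, Relation.EqvGen (fun x y => y = M.σ x ∨ y = M.α x) a b

/-- planar = connected of genus `0`, i.e. Euler's relation holds -/
def Planar : Prop := M.Connected ∧ M.nV + M.nF = M.nE + 2

/-- the dual map: the face permutation becomes the vertex permutation -/
def dual : CombMap where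
  D := M.D
  σ := M.α.trans M.σ
  α := M.α
  hinvol := M.hinvol
  hfree := M.hfree

/-- an edge: an unordered pair `{d, α d}` of darts -/
def Edge : Type := {p : Finset M.D // ∃ d : M.D, p = {d, M.α d}}

noncomputable instance : Fintype M.Edge := by
  classical exact Subtype.fintype _

instance : DecidableEq M.Edge := Subtype.instDecidableEq

/-- the darts belonging to an edge set -/
def darts (S : Finset M.Edge) : Set M.D := {d | ∃ p ∈ S, d ∈ p.val}

/-- `p S`: the number of connected components of the spanning subgraph of the
map with edge set `S`: darts are identified along vertex rotations and along
the involution for darts belonging to `S`. -/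
noncomputable def pS (S : Finset M.Edge) : ℕ :=
  Nat.card (Quot (fun a b : M.D =>
    b = M.σ a ∨ (a ∈ M.darts S ∧ b = M.α a)))

/-- `p(S^D)`: the number of connected components of the spanning subgraph of
the dual map whose edge set is the complement `Sᶜ` (an edge of the dual lies in
`S^D` iff its dual edge is not in `S`). -/
noncomputable def pSdual (S : Finset M.Edge) : ℕ :=
  Nat.card (Quot (fun a b : M.D =>
    b = M.σ (M.α a) ∨ (a ∈ M.darts Sᶜ ∧ b = M.α a)))

/-- the Fortuin–Kasteleyn partition function `Z(M; q, v)` -/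
noncomputable def Z (F : Type) [Field F] (q v : F) : F :=
  ∑ S : Finset M.Edge, v ^ S.card * q ^ M.pS S

end CombMap

/-!
Writing `p(Sᴰ)` for the number of components of the dual on the edges outside `S`, the termwise
identity `v^|S| q^p(S) = q^(1-|F|) v^|E| (q/v)^|Sᶜ| q^p(Sᴰ)` reduces the duality to
`p(S) + |S| + 1 = |V| + p(Sᴰ)`. The function `S ↦ p(S) + |S| - p(Sᴰ)` does not decrease when an
edge `e` is added to `S`: if the ends of `e` are already joined in `S`, only `p(Sᴰ)` can change,
by at most one; otherwise the ends of the dual edge stay joined around a face of `S`, so only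
`p(S)` changes. Its values at `S = ∅` and at `S = E` are `|V| - 1` and `1 + |E| - |F|`, which agree
by Euler's relation, so it is constant.
-/

namespace Relation

variable {X : Type*} {r s : X → X → Prop}

theorem card_quot_le_of_le_eqvGen [Finite X] (h : r ≤ EqvGen s) :
    Nat.card (Quot s) ≤ Nat.card (Quot r) :=
  Nat.card_le_card_of_surjective
    (Quot.lift (Quot.mk s) fun a b hab => Quot.eqvGen_sound (h a b hab))
    (by rintro ⟨a⟩; exact ⟨Quot.mk r a, rfl⟩)

theorem card_quot_eq_of_eqvGen_eq [Finite X] (h : EqvGen r = EqvGen s) :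
    Nat.card (Quot r) = Nat.card (Quot s) :=
  le_antisymm (card_quot_le_of_le_eqvGen fun a b hab => h ▸ EqvGen.rel a b hab)
    (card_quot_le_of_le_eqvGen fun a b hab => h ▸ EqvGen.rel a b hab)

theorem card_quot_sup_pair_of_eqvGen [Finite X] {x y : X} (hxy : EqvGen r x y) :
    Nat.card (Quot fun a b => r a b ∨ a = x ∧ b = y) = Nat.card (Quot r) := by
  refine card_quot_eq_of_eqvGen_eq (le_antisymm (EqvGen.eqvGen_le ?_) (EqvGen.eqvGen_mono ?_))
  · rintro a b (hab | ⟨rfl, rfl⟩)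
    exacts [EqvGen.rel a b hab, hxy]
  · exact fun a b => Or.inl

theorem card_quot_le_card_quot_sup_pair_add_one [Finite X] (x y : X) :
    Nat.card (Quot r) ≤ Nat.card (Quot fun a b => r a b ∨ a = x ∧ b = y) + 1 := by
  classical
  let merged a := EqvGen r a x ∨ EqvGen r a y
  have hmerged {a b} (hab : EqvGen r a b) : merged a → merged b := by
    rintro (h | h)
    exacts [Or.inl (.trans _ _ _ (.symm _ _ hab) h), Or.inr (.trans _ _ _ (.symm _ _ hab) h)]
  let t a b := EqvGen r a b ∨ merged a ∧ merged b
  have : IsEquiv X t :=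
    { refl := fun a => Or.inl (.refl a)
      symm := fun a b => Or.imp (EqvGen.symm a b) And.symm
      trans := by
        rintro a b c (hab | ⟨ha, hb⟩) (hbc | ⟨hb', hc⟩)
        · exact Or.inl (.trans _ _ _ hab hbc)
        · exact Or.inr ⟨hmerged (.symm _ _ hab) hb', hc⟩
        · exact Or.inr ⟨ha, hmerged hbc hb⟩
        · exact Or.inr ⟨ha, hc⟩ }
  have hst : EqvGen (fun a b => r a b ∨ a = x ∧ b = y) ≤ t := by
    refine EqvGen.eqvGen_le ?_
    rintro a b (hab | ⟨rfl, rfl⟩)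
    exacts [Or.inl (.rel a b hab), Or.inr ⟨Or.inl (.refl _), Or.inr (.refl _)⟩]
  let f := Quot.factor r (fun a b => r a b ∨ a = x ∧ b = y) fun _ _ => Or.inl
  let g c := if c = Quot.mk r y then none else some (f c)
  have hg : Function.Injective g := by
    refine Quot.ind fun a => Quot.ind fun b hab => ?_
    by_cases ha : Quot.mk r a = Quot.mk r y <;> by_cases hb : Quot.mk r b = Quot.mk r y <;>
      simp only [g, ha, hb, reduceIte, reduceCtorEq, Option.some.injEq] at hab ⊢
    rcases hst a b (Quot.eqvGen_exact hab) with h | ⟨hxa | hya, hxb | hyb⟩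
    · exact Quot.eqvGen_sound h
    · exact Quot.eqvGen_sound (.trans _ _ _ hxa (.symm _ _ hxb))
    · exact absurd (Quot.eqvGen_sound hyb) hb
    · exact absurd (Quot.eqvGen_sound hya) ha
    · exact absurd (Quot.eqvGen_sound hya) ha
  calc Nat.card (Quot r) ≤ Nat.card (Option _) := Nat.card_le_card_of_injective g hg
    _ = _ := Finite.card_option

theorem _root_.Equiv.Perm.eqvGen_apply_self_of_forall_ne [Finite X] (f : Equiv.Perm X) (y : X)
    (h : ∀ n : ℕ, (f ^ n) y ≠ y → EqvGen r ((f ^ n) y) (f ((f ^ n) y))) :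
    EqvGen r (f y) y := by
  have walk : ∀ m : ℕ, EqvGen r (f y) y ∨ EqvGen r (f y) ((f ^ (m + 1)) y) := by
    intro m
    induction m with
    | zero => exact Or.inr (by simpa using .refl _)
    | succ m ih =>
      refine ih.elim Or.inl fun hm => ?_
      by_cases hret : (f ^ (m + 1)) y = y
      · rw [hret] at hm
        exact Or.inl hm
      · rw [pow_succ' f (m + 1), Equiv.Perm.mul_apply]
        exact Or.inr (.trans _ _ _ hm (h _ hret))
  have hperiod : (f ^ (orderOf f - 1 + 1)) y = y := by
    rw [Nat.sub_add_cancel (orderOf_pos f), pow_orderOf_eq_one, Equiv.Perm.one_apply]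
  exact (walk (orderOf f - 1)).elim id fun h => by rwa [hperiod] at h

end Relation

namespace CombMap

open Relation

variable (M : CombMap)

def edgeOf (d : M.D) : M.Edge := ⟨{d, M.α d}, d, rfl⟩

@[simp]
lemma edgeOf_α (d : M.D) : M.edgeOf (M.α d) = M.edgeOf d :=
  Subtype.ext (by simp [edgeOf, M.hinvol d, Finset.pair_comm])

lemma edgeOf_surjective : Function.Surjective M.edgeOf := by
  rintro ⟨p, d, rfl⟩
  exact ⟨d, rfl⟩

lemma edgeOf_eq_edgeOf_iff {a d : M.D} : M.edgeOf a = M.edgeOf d ↔ a = d ∨ a = M.α d := by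
  constructor
  · intro h
    have : a ∈ (M.edgeOf d).val := h ▸ by simp [edgeOf]
    simpa [edgeOf] using this
  · rintro (rfl | rfl) <;> simp

lemma mem_darts {S : Finset M.Edge} {x : M.D} : x ∈ M.darts S ↔ M.edgeOf x ∈ S := by
  constructor
  · rintro ⟨⟨p, d, rfl⟩, hp, hx⟩
    have : M.edgeOf x = M.edgeOf d := M.edgeOf_eq_edgeOf_iff.2 (by simpa using hx)
    rwa [this]
  · exact fun h => ⟨M.edgeOf x, h, by simp [edgeOf]⟩

lemma card_edge : Fintype.card M.Edge = M.nE := by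
  rw [nE, ← Nat.card_eq_fintype_card]
  refine (Nat.card_eq_of_bijective
    (Quot.lift M.edgeOf fun a b (h : b = M.α a) => by rw [h, edgeOf_α]) ⟨?_, ?_⟩).symm
  · rintro ⟨a⟩ ⟨b⟩ hab
    rcases M.edgeOf_eq_edgeOf_iff.1 hab with rfl | rfl
    exacts [rfl, Quot.sound (M.hinvol b).symm]
  · intro e
    obtain ⟨d, rfl⟩ := M.edgeOf_surjective e
    exact ⟨Quot.mk _ d, rfl⟩

/-- The relation on darts whose classes are the components of the graph with vertices the orbits of
`ρ` and edge set `T`: `ρ = σ` gives the map itself and `ρ = σ ∘ α` its dual. -/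
def compRel (ρ : Equiv.Perm M.D) (T : Finset M.Edge) (a b : M.D) : Prop :=
  b = ρ a ∨ (a ∈ M.darts T ∧ b = M.α a)

noncomputable def numComponents (ρ : Equiv.Perm M.D) (T : Finset M.Edge) : ℕ :=
  Nat.card (Quot (M.compRel ρ T))

lemma pS_eq_numComponents (S : Finset M.Edge) : M.pS S = M.numComponents M.σ S :=
  rfl

lemma pSdual_eq_numComponents (S : Finset M.Edge) :
    M.pSdual S = M.numComponents (M.α.trans M.σ) Sᶜ :=
  rfl

variable (ρ : Equiv.Perm M.D)

lemma eqvGen_compRel_insert (T : Finset M.Edge) (d : M.D) :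
    EqvGen (M.compRel ρ (insert (M.edgeOf d) T)) =
      EqvGen fun a b => M.compRel ρ T a b ∨ a = d ∧ b = M.α d := by
  refine le_antisymm (EqvGen.eqvGen_le ?_) (EqvGen.eqvGen_le ?_)
  · rintro a b (rfl | ⟨ha, rfl⟩)
    · exact .rel _ _ (Or.inl (Or.inl rfl))
    rw [mem_darts, Finset.mem_insert, edgeOf_eq_edgeOf_iff] at ha
    rcases ha with (rfl | rfl) | ha
    · exact .rel _ _ (Or.inr ⟨rfl, rfl⟩)
    · rw [M.hinvol]
      exact .symm _ _ (.rel _ _ (Or.inr ⟨rfl, rfl⟩))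
    · exact .rel _ _ (Or.inl (Or.inr ⟨M.mem_darts.2 ha, rfl⟩))
  · rintro a b ((rfl | ⟨ha, rfl⟩) | ⟨rfl, rfl⟩)
    · exact .rel _ _ (Or.inl rfl)
    · exact .rel _ _ (Or.inr ⟨M.mem_darts.2 (Finset.mem_insert_of_mem (M.mem_darts.1 ha)), rfl⟩)
    · exact .rel _ _ (Or.inr ⟨M.mem_darts.2 (Finset.mem_insert_self _ _), rfl⟩)

lemma numComponents_le_numComponents_insert_add_one (T : Finset M.Edge) (d : M.D) :
    M.numComponents ρ T ≤ M.numComponents ρ (insert (M.edgeOf d) T) + 1 := by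
  rw [numComponents, numComponents, card_quot_eq_of_eqvGen_eq (M.eqvGen_compRel_insert ρ T d)]
  exact card_quot_le_card_quot_sup_pair_add_one d (M.α d)

lemma numComponents_insert_of_eqvGen {T : Finset M.Edge} {d : M.D}
    (h : EqvGen (M.compRel ρ T) d (M.α d)) :
    M.numComponents ρ (insert (M.edgeOf d) T) = M.numComponents ρ T := by
  rw [numComponents, numComponents, card_quot_eq_of_eqvGen_eq (M.eqvGen_compRel_insert ρ T d)]
  exact card_quot_sup_pair_of_eqvGen h

/-- The face permutation of the submap with edge set `S`, in which each dart of an edge outside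
`S` is a dangling half-edge. -/
def facePerm (S : Finset M.Edge) : Equiv.Perm M.D :=
  (Function.Involutive.toPerm (fun x => if M.edgeOf x ∈ S then M.α x else x) fun x => by
    by_cases hx : M.edgeOf x ∈ S <;> simp [hx, M.hinvol]).trans M.σ

lemma facePerm_apply (S : Finset M.Edge) (x : M.D) :
    M.facePerm S x = M.σ (if M.edgeOf x ∈ S then M.α x else x) :=
  rfl

lemma eqvGen_compRel_facePerm (S : Finset M.Edge) (x : M.D) :
    EqvGen (M.compRel M.σ S) x (M.facePerm S x) := by
  rw [facePerm_apply]
  split_ifs with hx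
  · exact .trans _ _ _ (.rel _ _ (Or.inr ⟨M.mem_darts.2 hx, rfl⟩)) (.rel _ _ (Or.inl rfl))
  · exact .rel _ _ (Or.inl rfl)

lemma eqvGen_dual_compRel_facePerm {S T : Finset M.Edge} {x : M.D}
    (hx : M.edgeOf x ∈ S ∨ M.edgeOf x ∈ T) :
    EqvGen (M.compRel (M.α.trans M.σ) T) x (M.facePerm S x) := by
  rw [facePerm_apply]
  split_ifs with hS
  · exact .rel _ _ (Or.inl rfl)
  · have hT : x ∈ M.darts T := M.mem_darts.2 (hx.resolve_left hS)
    refine .trans _ _ _ (.rel _ _ (Or.inr ⟨hT, rfl⟩)) (.rel _ _ (Or.inl ?_))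
    exact congrArg M.σ (M.hinvol x).symm

/-- The face of `S` entered at `α d` stays in the component of `α d`, so it never reaches `d` and
never crosses `e = edgeOf d`; walking around it is therefore a path in the dual on the edges
outside `insert e S`, from `σ (α d)`, a dual neighbour of `d`, back to `α d`. -/
lemma eqvGen_dual_compRel_of_not_eqvGen {S : Finset M.Edge} {d : M.D} (hd : M.edgeOf d ∉ S)
    (hsep : ¬ EqvGen (M.compRel M.σ S) d (M.α d)) :
    EqvGen (M.compRel (M.α.trans M.σ) (insert (M.edgeOf d) S)ᶜ) d (M.α d) := by
  set f := M.facePerm S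
  have hfα : f (M.α d) = M.σ (M.α d) := by simp [f, facePerm_apply, hd]
  have horbit (n : ℕ) : EqvGen (M.compRel M.σ S) (M.α d) ((f ^ n) (M.α d)) := by
    induction n with
    | zero => exact .refl _
    | succ n ih =>
      rw [pow_succ', Equiv.Perm.mul_apply]
      exact .trans _ _ _ ih (M.eqvGen_compRel_facePerm S _)
  have hstep (n : ℕ) (hne : (f ^ n) (M.α d) ≠ M.α d) :
      EqvGen (M.compRel (M.α.trans M.σ) (insert (M.edgeOf d) S)ᶜ)
        ((f ^ n) (M.α d)) (f ((f ^ n) (M.α d))) := by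
    refine M.eqvGen_dual_compRel_facePerm ?_
    have hnd : (f ^ n) (M.α d) ≠ d := fun h => by
      have := horbit n
      rw [h] at this
      exact hsep (.symm _ _ this)
    have hne' : M.edgeOf ((f ^ n) (M.α d)) ≠ M.edgeOf d := by
      rw [Ne, edgeOf_eq_edgeOf_iff]
      tauto
    by_cases hS : M.edgeOf ((f ^ n) (M.α d)) ∈ S
    · exact Or.inl hS
    · exact Or.inr (by simp [hS, hne'])
  have hface := f.eqvGen_apply_self_of_forall_ne (M.α d) hstep
  rw [hfα] at hface
  exact .trans _ _ _ (.rel _ _ (Or.inl rfl)) hface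

lemma pS_add_pSdual_insert_le {S : Finset M.Edge} {e : M.Edge} (he : e ∉ S) :
    M.pS S + M.pSdual (insert e S) ≤ M.pS (insert e S) + 1 + M.pSdual S := by
  obtain ⟨d, rfl⟩ := M.edgeOf_surjective e
  have hcompl : Sᶜ = insert (M.edgeOf d) (insert (M.edgeOf d) S)ᶜ := by
    rw [Finset.compl_insert, Finset.insert_erase (Finset.mem_compl.2 he)]
  rw [pS_eq_numComponents, pS_eq_numComponents, pSdual_eq_numComponents,
    pSdual_eq_numComponents, hcompl]
  by_cases hsep : EqvGen (M.compRel M.σ S) d (M.α d)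
  · rw [M.numComponents_insert_of_eqvGen _ hsep]
    linarith [M.numComponents_le_numComponents_insert_add_one (M.α.trans M.σ)
      (insert (M.edgeOf d) S)ᶜ d]
  · rw [M.numComponents_insert_of_eqvGen _ (M.eqvGen_dual_compRel_of_not_eqvGen he hsep)]
    linarith [M.numComponents_le_numComponents_insert_add_one M.σ S d]

lemma monotone_pS_add_card_sub_pSdual :
    Monotone fun S : Finset M.Edge => (M.pS S + S.card : ℤ) - M.pSdual S :=
  Finset.monotone_iff_forall_le_cons.2 fun S e he => by
    have := M.pS_add_pSdual_insert_le he
    simp only [Finset.cons_eq_insert, Finset.card_insert_of_notMem he]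
    push_cast
    omega

lemma numComponents_empty : M.numComponents ρ ∅ = Nat.card (Quot (M.orbitRel ρ)) := by
  unfold numComponents
  congr
  funext a b
  simp [compRel, orbitRel, darts]

lemma numComponents_univ [Nonempty M.D]
    (h : ∀ a b, EqvGen (fun x y => y = ρ x ∨ y = M.α x) a b) :
    M.numComponents ρ Finset.univ = 1 := by
  refine Nat.card_eq_one_iff_unique.2 ⟨⟨?_⟩, ⟨Quot.mk _ (Classical.arbitrary _)⟩⟩
  rintro ⟨a⟩ ⟨b⟩
  refine Quot.eqvGen_sound (EqvGen.mono (fun x y hxy => ?_) a b (h a b))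
  exact hxy.imp_right fun hy => ⟨M.mem_darts.2 (Finset.mem_univ _), hy⟩

lemma pS_empty : M.pS ∅ = M.nV :=
  M.numComponents_empty M.σ

lemma pSdual_univ : M.pSdual Finset.univ = M.nF := by
  rw [pSdual_eq_numComponents, Finset.compl_univ, numComponents_empty, nF]

variable {M}

lemma Connected.pS_univ [Nonempty M.D] (hc : M.Connected) : M.pS Finset.univ = 1 :=
  M.numComponents_univ M.σ hc

lemma Connected.pSdual_empty [Nonempty M.D] (hc : M.Connected) : M.pSdual ∅ = 1 := by
  rw [pSdual_eq_numComponents, Finset.compl_empty]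
  refine M.numComponents_univ _ fun a b => EqvGen.eqvGen_le (fun x y hxy => ?_) a b (hc a b)
  rcases hxy with rfl | rfl
  · exact .trans _ (M.α x) _ (.rel _ _ (Or.inr rfl)) (.rel _ _ (Or.inl (by simp [M.hinvol])))
  · exact .rel _ _ (Or.inr rfl)

lemma Planar.nonempty (hM : M.Planar) : Nonempty M.D := by
  rw [← not_isEmpty_iff]
  intro
  have := hM.2
  simp only [nV, nE, nF, Nat.card_of_isEmpty] at this
  omega

theorem Planar.pS_add_card_add_one (hM : M.Planar) (S : Finset M.Edge) :
    M.pS S + S.card + 1 = M.nV + M.pSdual S := by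
  have := hM.nonempty
  have hlow := M.monotone_pS_add_card_sub_pSdual (Finset.empty_subset S)
  have hhigh := M.monotone_pS_add_card_sub_pSdual (Finset.subset_univ S)
  simp only [pS_empty, hM.1.pSdual_empty, hM.1.pS_univ, pSdual_univ, Finset.card_empty,
    Finset.card_univ, card_edge] at hlow hhigh
  have := hM.2
  omega

end CombMap

theorem partition_function_duality (M : CombMap) (hM : M.Planar)
    (F : Type) [Field F] (q v : F) (hq : q ≠ 0) (hv : v ≠ 0) :
    M.Z F q v = q ^ ((1 : ℤ) - (M.nF : ℤ)) * v ^ M.nE * M.dual.Z F q (q / v) := by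
  have hdual : M.dual.Z F q (q / v) = ∑ S : Finset M.Edge, (q / v) ^ Sᶜ.card * q ^ M.pSdual S :=
    (Fintype.sum_bijective (compl : Finset M.Edge → Finset M.Edge) compl_bijective _ _
      fun _ => rfl).symm
  rw [hdual, Finset.mul_sum]
  refine Finset.sum_congr rfl fun S _ => ?_
  have hcard : S.card + Sᶜ.card = M.nE := (Finset.card_add_card_compl S).trans M.card_edge
  have hp : (M.pS S : ℤ) = 1 - M.nF + Sᶜ.card + M.pSdual S := by
    have := hM.pS_add_card_add_one S
    have := hM.2
    omega
  rw [← hcard, pow_add, ← zpow_natCast q (M.pS S), hp, zpow_add₀ hq, zpow_add₀ hq, zpow_natCast,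
    zpow_natCast, div_pow]
  field_simp
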